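/- Let 0 < R < π and let u ∈ C¹([0,R]) be such that the first integral θ ↦ sin θ · u'(θ)/(1 + u'(θ)²)² is constant on (0,R) (i.e., u is a rotationally symmetric stationary configuration of the scale-invariant resistance defined up to the pole θ = 0). Then u is constant on [0,R]. Moreover this constant solution maximizes the resistance: for every differentiable v : [0,R] → ℝ, 2π ∫₀^R sin θ/(1 + v'(θ)²) dθ ≤ 2π(1 − cos R), with 2π(1 − cos R) being the resistance of the constant profile. -/

import Mathlib

open Real Filter Set Topology

/-- The scale-invariant resistance of the rotationally symmetric radial graph
`ρ(θ) = exp (u θ)`, `θ ∈ [0,R]`: `R₁[u] = 2π ∫₀ᴿ sin θ / (1 + u'(θ)²) dθ`. -/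
noncomputable def res1 (R : ℝ) (u : ℝ → ℝ) : ℝ :=
  2 * π * ∫ θ in (0:ℝ)..R, Real.sin θ / (1 + (deriv u θ) ^ 2)

lemma aux_integrable (R : ℝ) (v : ℝ → ℝ) :
    IntervalIntegrable (fun θ => Real.sin θ / (1 + (deriv v θ) ^ 2)) MeasureTheory.volume 0 R := by
  rw [intervalIntegrable_iff]
  apply MeasureTheory.Measure.integrableOn_of_bounded (M := 1)
  · exact (measure_Ioc_lt_top).ne
  · exact ((Real.measurable_sin.div ((measurable_const.add
      ((measurable_deriv v).pow_const 2)))).aestronglyMeasurable)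
  · filter_upwards with a
    have h1 : (1:ℝ) ≤ 1 + (deriv v a) ^ 2 := by nlinarith [sq_nonneg (deriv v a)]
    rw [Real.norm_eq_abs, abs_div, abs_of_pos (by linarith : (0:ℝ) < 1 + (deriv v a) ^ 2)]
    calc |Real.sin a| / (1 + (deriv v a) ^ 2) ≤ 1 / 1 :=
          div_le_div₀ (by norm_num) (abs_le.mpr ⟨Real.neg_one_le_sin a, Real.sin_le_one a⟩) one_pos h1
      _ = 1 := by norm_num

lemma aux_ineq (R : ℝ) (hR0 : 0 < R) (hRpi : R < π) (v : ℝ → ℝ) :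
    (∫ θ in (0:ℝ)..R, Real.sin θ / (1 + (deriv v θ) ^ 2)) ≤ 1 - Real.cos R := by
  have h := intervalIntegral.integral_mono_on (μ := MeasureTheory.volume) hR0.le
    (aux_integrable R v) (Real.continuous_sin.intervalIntegrable 0 R) ?_
  · calc (∫ θ in (0:ℝ)..R, Real.sin θ / (1 + (deriv v θ) ^ 2))
        ≤ ∫ θ in (0:ℝ)..R, Real.sin θ := h
      _ = Real.cos 0 - Real.cos R := integral_sin
      _ = 1 - Real.cos R := by rw [Real.cos_zero]
  · intro x hx
    have hs : 0 ≤ Real.sin x := Real.sin_nonneg_of_nonneg_of_le_pi hx.1 (hx.2.trans hRpi.le)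
    have h1 : (1:ℝ) ≤ 1 + (deriv v x) ^ 2 := by nlinarith [sq_nonneg (deriv v x)]
    calc Real.sin x / (1 + (deriv v x) ^ 2) ≤ Real.sin x / 1 :=
          div_le_div_of_nonneg_left hs one_pos h1
      _ = Real.sin x := by norm_num

/-- A rotationally symmetric stationary configuration of the scale-invariant
resistance that is `C¹` up to the pole (i.e. whose first integral
`sin θ · u'/(1+u'²)²` is constant on `(0,R)`) is constant, and it maximizes the
resistance among all differentiable profiles, its resistance being `2π(1 − cos R)`. -/
theorem stmt_9 (R : ℝ) (hR0 : 0 < R) (hRpi : R < π) (u : ℝ → ℝ)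
    (hu : ContDiffOn ℝ 1 u (Set.Icc 0 R))
    (hC : ∃ C : ℝ, ∀ θ ∈ Set.Ioo 0 R,
      Real.sin θ * deriv u θ / (1 + (deriv u θ) ^ 2) ^ 2 = C) :
    (∃ c : ℝ, ∀ θ ∈ Set.Icc 0 R, u θ = c) ∧
    (∀ v : ℝ → ℝ, DifferentiableOn ℝ v (Set.Icc 0 R) →
      2 * π * (∫ θ in (0:ℝ)..R, Real.sin θ / (1 + (deriv v θ) ^ 2)) ≤
        2 * π * (1 - Real.cos R)) ∧
    res1 R u = 2 * π * (1 - Real.cos R) := by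
  obtain ⟨C, hC⟩ := hC
  -- Step 1: bound |C| ≤ sin θ / 2 ≤ θ / 2 on (0,R), hence C = 0.
  have hbound : ∀ θ ∈ Set.Ioo 0 R, |C| ≤ θ / 2 := by
    intro θ hθ
    have hs : 0 < Real.sin θ := Real.sin_pos_of_pos_of_lt_pi hθ.1 (hθ.2.trans hRpi)
    set d := deriv u θ with hd
    have hden : (0:ℝ) < (1 + d ^ 2) ^ 2 := by positivity
    have heq := hC θ hθ
    have habs : |C| ≤ Real.sin θ / 2 := by
      rw [← heq, abs_div, abs_of_pos hden, abs_mul, abs_of_pos hs,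
        div_le_div_iff₀ hden (by norm_num)]
      nlinarith [abs_nonneg d, sq_abs d, sq_nonneg (|d| - 1), hs.le, sq_nonneg d,
        sq_nonneg (d ^ 2)]
    have : Real.sin θ ≤ θ := Real.sin_le hθ.1.le
    linarith
  have hC0 : C = 0 := by
    by_contra h
    have hCpos : 0 < |C| := abs_pos.mpr h
    set θ := min (R / 2) |C| with hθdef
    have hθ1 : 0 < θ := lt_min (by linarith) hCpos
    have hθ2 : θ < R := lt_of_le_of_lt (min_le_left _ _) (by linarith)
    have := hbound θ ⟨hθ1, hθ2⟩
    have h2 : θ ≤ |C| := min_le_right _ _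
    linarith
  -- Step 2: deriv u = 0 on (0,R)
  have hderiv0 : ∀ θ ∈ Set.Ioo 0 R, deriv u θ = 0 := by
    intro θ hθ
    have hs : 0 < Real.sin θ := Real.sin_pos_of_pos_of_lt_pi hθ.1 (hθ.2.trans hRpi)
    have heq := hC θ hθ
    rw [hC0] at heq
    have hden : ((1 + (deriv u θ) ^ 2) ^ 2 : ℝ) ≠ 0 := by positivity
    have := (div_eq_zero_iff.mp heq).resolve_right hden
    rcases mul_eq_zero.mp this with h | h
    · exact absurd h hs.ne'
    · exact h
  -- Step 3: u is constant on [0,R]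
  have hudiff : DifferentiableOn ℝ u (Set.Icc 0 R) := hu.differentiableOn one_ne_zero
  have hUD : UniqueDiffOn ℝ (Set.Icc 0 R) := uniqueDiffOn_Icc hR0
  have hdwIoo : ∀ θ ∈ Set.Ioo 0 R, derivWithin u (Set.Icc 0 R) θ = 0 := by
    intro θ hθ
    rw [derivWithin_of_mem_nhds (Icc_mem_nhds hθ.1 hθ.2)]
    exact hderiv0 θ hθ
  have hdw0 : derivWithin u (Set.Icc 0 R) 0 = 0 := by
    have hcw : ContinuousWithinAt (derivWithin u (Set.Icc 0 R)) (Set.Icc 0 R) 0 :=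
      (hu.continuousOn_derivWithin hUD le_rfl) 0 (left_mem_Icc.mpr hR0.le)
    have h1 : Tendsto (derivWithin u (Set.Icc 0 R)) (𝓝[Set.Ioo 0 R] 0)
        (𝓝 (derivWithin u (Set.Icc 0 R) 0)) :=
      hcw.tendsto.mono_left (nhdsWithin_mono _ Set.Ioo_subset_Icc_self)
    have h2 : Tendsto (derivWithin u (Set.Icc 0 R)) (𝓝[Set.Ioo 0 R] 0) (𝓝 0) := by
      refine Tendsto.congr' ?_ tendsto_const_nhds
      filter_upwards [self_mem_nhdsWithin] with x hx
      exact (hdwIoo x hx).symm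
    have hne : (𝓝[Set.Ioo 0 R] (0:ℝ)).NeBot := by
      rw [← mem_closure_iff_nhdsWithin_neBot, closure_Ioo hR0.ne]
      exact ⟨le_rfl, hR0.le⟩
    exact tendsto_nhds_unique h1 h2
  have hconst : ∀ θ ∈ Set.Icc 0 R, u θ = u 0 := by
    apply constant_of_derivWithin_zero hudiff
    intro x hx
    rcases eq_or_lt_of_le hx.1 with h | h
    · rw [← h]; exact hdw0
    · exact hdwIoo x ⟨h, hx.2⟩
  refine ⟨⟨u 0, hconst⟩, ?_, ?_⟩
  · intro v hv
    have := aux_ineq R hR0 hRpi v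
    have hπ : (0:ℝ) ≤ 2 * π := by positivity
    exact mul_le_mul_of_nonneg_left this hπ
  · unfold res1
    congr 1
    have : (∫ θ in (0:ℝ)..R, Real.sin θ / (1 + (deriv u θ) ^ 2)) =
        ∫ θ in (0:ℝ)..R, Real.sin θ := by
      apply intervalIntegral.integral_congr_ae
      have hne : ∀ᵐ x : ℝ, x ≠ R :=
        (MeasureTheory.ae_iff.mpr (by simp [MeasureTheory.measure_singleton] :
          MeasureTheory.volume {x : ℝ | ¬ x ≠ R} = 0))
      filter_upwards [hne] with x hx hmem
      rw [Set.uIoc_of_le hR0.le] at hmem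
      have hxR : x < R := lt_of_le_of_ne hmem.2 hx
      rw [hderiv0 x ⟨hmem.1, hxR⟩]
      norm_num
    rw [this, integral_sin, Real.cos_zero]
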